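/- For a continuously differentiable path X : [0,T] → ℝ^d and any two multi-indices I, J with entries in {1,…,d}, the shuffle identity holds: ⟨I ⧢ J, 𝕏_{s,t}⟩ = 𝕏_{s,t}^{(I)} · 𝕏_{s,t}^{(J)}, where ⧢ denotes the shuffle product of multi-indices extended linearly. -/

import Mathlib

open intervalIntegral

/-- Auxiliary signature: recursion on the *reversed* multi-index. -/
noncomputable def sigAux {d : ℕ} (X : ℝ → Fin d → ℝ) (s : ℝ) : List (Fin d) → ℝ → ℝ
  | [] => fun _ => (1 : ℝ)
  | a :: K => fun t => ∫ u in s..t, sigAux X s K u * deriv (fun v => X v a) u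

/-- Signature term `𝕏_{s,t}^{(K)}` of a C¹ path: `𝕏^{(∅)} = 1` and
`𝕏_{s,t}^{(K̂ ⊗ a)} = ∫_s^t 𝕏_{s,u}^{(K̂)} (X^{(a)})'(u) du`. -/
noncomputable def sig {d : ℕ} (X : ℝ → Fin d → ℝ) (s t : ℝ) (K : List (Fin d)) : ℝ :=
  sigAux X s K.reverse t

/-- Shuffle product of two words, valued in formal sums (multisets) of words. -/
def shuffle {α : Type*} : List α → List α → Multiset (List α)
  | [], J => {J}
  | a :: I, [] => {a :: I}
  | a :: I, b :: J =>
      ((shuffle I (b :: J)).map (a :: ·)) + ((shuffle (a :: I) J).map (b :: ·))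
termination_by I J => I.length + J.length

/-!
Reversing words turns the shuffle recursion on first letters into one on last letters
(`map_reverse_shuffle`), which is the recursion defining the signature. For words `I ⊗ a` and
`J ⊗ b`, both sides of the identity vanish at `t = s`, and by the Leibniz rule and induction on
`|I| + |J|` they have the same derivative in `t`, so they agree.
-/

section Shuffle

variable {α : Type*}

@[simp]
theorem shuffle_nil_left (J : List α) : shuffle [] J = {J} := by
  rw [shuffle]

@[simp]
theorem shuffle_nil_right (I : List α) : shuffle I [] = {I} := by
  cases I <;> rw [shuffle]

theorem shuffle_cons_cons (a b : α) (I J : List α) :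
    shuffle (a :: I) (b :: J) =
      (shuffle I (b :: J)).map (a :: ·) + (shuffle (a :: I) J).map (b :: ·) := by
  rw [shuffle]

theorem shuffle_append_singleton (I J : List α) (a b : α) :
    shuffle (I ++ [a]) (J ++ [b]) =
      (shuffle I (J ++ [b])).map (· ++ [a]) + (shuffle (I ++ [a]) J).map (· ++ [b]) := by
  induction I generalizing J with
  | nil =>
    induction J with
    | nil => simp [shuffle_cons_cons, add_comm]
    | cons c J ih =>
      simp only [List.nil_append] at ih
      simp [shuffle_cons_cons, ih, Multiset.map_map, Multiset.cons_swap]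
  | cons p I ihI =>
    induction J with
    | nil =>
      have h := ihI []
      simp only [List.nil_append] at h
      simp only [List.cons_append, List.nil_append, shuffle_cons_cons, h, shuffle_nil_right,
        Multiset.map_singleton, List.append_assoc, Multiset.map_add, Multiset.map_map,
        Function.comp_apply]
      abel
    | cons c J ihJ =>
      have h := ihI (c :: J)
      simp only [List.cons_append, shuffle_cons_cons] at h ihJ ⊢
      rw [h, ihJ]
      simp only [Multiset.map_add, Multiset.map_map, Function.comp_def, List.cons_append]
      abel

theorem map_reverse_shuffle (I J : List α) :
    (shuffle I J).map List.reverse = shuffle I.reverse J.reverse := by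
  induction I generalizing J with
  | nil => simp
  | cons a I ihI =>
    induction J with
    | nil => simp
    | cons b J ihJ =>
      rw [List.reverse_cons, List.reverse_cons, shuffle_append_singleton, ← List.reverse_cons,
        ← ihI, ← List.reverse_cons, ← ihJ, shuffle_cons_cons]
      simp [Multiset.map_map]

end Shuffle

theorem HasDerivAt.multiset_sum {ι 𝕜 F : Type*} [NontriviallyNormedField 𝕜]
    [NormedAddCommGroup F] [NormedSpace 𝕜 F] {m : Multiset ι} {f : ι → 𝕜 → F} {f' : ι → F}
    {x : 𝕜} (h : ∀ i ∈ m, HasDerivAt (f i) (f' i) x) :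
    HasDerivAt (fun y => (m.map fun i => f i y).sum) (m.map f').sum x := by
  induction m using Multiset.induction with
  | empty => simpa using hasDerivAt_const x (0 : F)
  | cons i m ih =>
    simp only [Multiset.map_cons, Multiset.sum_cons]
    exact (h i (Multiset.mem_cons_self i m)).add
      (ih fun j hj => h j (Multiset.mem_cons_of_mem hj))

theorem eq_of_forall_hasDerivAt_eq {E : Type*} [NormedAddCommGroup E] [NormedSpace ℝ E]
    {f g f' : ℝ → E} (hf : ∀ x, HasDerivAt f (f' x) x) (hg : ∀ x, HasDerivAt g (f' x) x)
    {a : ℝ} (ha : f a = g a) (b : ℝ) : f b = g b :=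
  isOpen_univ.eqOn_of_deriv_eq isPreconnected_univ
    (fun x _ => (hf x).differentiableAt.differentiableWithinAt)
    (fun x _ => (hg x).differentiableAt.differentiableWithinAt)
    (fun x _ => (hf x).deriv.trans (hg x).deriv.symm) (Set.mem_univ a) ha (Set.mem_univ b)

section Signature

variable {d : ℕ} {X : ℝ → Fin d → ℝ} {s : ℝ}

theorem sigAux_cons_self (a : Fin d) (K : List (Fin d)) : sigAux X s (a :: K) s = 0 :=
  intervalIntegral.integral_same

variable (hX : ∀ a, Continuous (deriv fun u => X u a))
include hX

theorem continuous_sigAux : ∀ K : List (Fin d), Continuous (sigAux X s K)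
  | [] => continuous_const
  | a :: K => intervalIntegral.continuous_primitive
      (fun _ _ => ((continuous_sigAux K).mul (hX a)).intervalIntegrable _ _) s

theorem hasDerivAt_sigAux_cons (a : Fin d) (K : List (Fin d)) (t : ℝ) :
    HasDerivAt (sigAux X s (a :: K)) (sigAux X s K t * deriv (fun u => X u a) t) t :=
  (((continuous_sigAux hX K).mul (hX a)).integral_hasStrictDerivAt s t).hasDerivAt

theorem sum_map_shuffle_sigAux (I J : List (Fin d)) (t : ℝ) :
    ((shuffle I J).map fun K => sigAux X s K t).sum = sigAux X s I t * sigAux X s J t := by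
  induction I generalizing J t with
  | nil => simp [sigAux]
  | cons a I ihI =>
    induction J generalizing t with
    | nil => simp [sigAux]
    | cons b J ihJ =>
      set D : ℝ → ℝ := fun u =>
        sigAux X s I u * sigAux X s (b :: J) u * deriv (fun v => X v a) u +
          sigAux X s (a :: I) u * sigAux X s J u * deriv (fun v => X v b) u
      have hsum (u : ℝ) : HasDerivAt
          (fun t => ((shuffle (a :: I) (b :: J)).map fun K => sigAux X s K t).sum) (D u) u := by
        simp only [shuffle_cons_cons, Multiset.map_add, Multiset.map_map, Function.comp_def,
          Multiset.sum_add]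
        have h := (HasDerivAt.multiset_sum (m := shuffle I (b :: J))
          fun K _ => hasDerivAt_sigAux_cons (s := s) hX a K u).add
          (HasDerivAt.multiset_sum (m := shuffle (a :: I) J)
          fun K _ => hasDerivAt_sigAux_cons (s := s) hX b K u)
        rwa [Multiset.sum_map_mul_right, Multiset.sum_map_mul_right, ihI, ihJ] at h
      have hprod (u : ℝ) : HasDerivAt
          (fun t => sigAux X s (a :: I) t * sigAux X s (b :: J) t) (D u) u :=
        ((hasDerivAt_sigAux_cons hX a I u).mul (hasDerivAt_sigAux_cons hX b J u)).congr_deriv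
          (by ring)
      exact eq_of_forall_hasDerivAt_eq hsum hprod (a := s)
        (by simp [shuffle_cons_cons, sigAux_cons_self]) t

end Signature

theorem shuffle_identity_general {d : ℕ} (X : ℝ → Fin d → ℝ)
    (hX : ∀ a, ContDiff ℝ 1 fun u => X u a)
    (s t : ℝ)
    (I J : List (Fin d)) :
    ((shuffle I J).map (sig X s t)).sum = sig X s t I * sig X s t J := by
  have hX' : ∀ a, Continuous (deriv fun u => X u a) := fun a => (hX a).continuous_deriv le_rfl
  rw [sig, sig, ← sum_map_shuffle_sigAux hX', ← map_reverse_shuffle, Multiset.map_map]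
  rfl

/-- shuffle identity `⟨I ⧢ J, 𝕏_{s,t}⟩ = 𝕏_{s,t}^{(I)} · 𝕏_{s,t}^{(J)}`
for a C¹ path `X : [0,T] → ℝ^d`. -/
theorem shuffle_identity {d : ℕ} (T : ℝ) (X : ℝ → Fin d → ℝ)
    (hX : ∀ a, ContDiff ℝ 1 fun u => X u a)
    (s t : ℝ) (hs : 0 ≤ s) (hst : s ≤ t) (ht : t ≤ T)
    (I J : List (Fin d)) :
    ((shuffle I J).map (sig X s t)).sum = sig X s t I * sig X s t J :=
  shuffle_identity_general X hX s t I J
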